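/- Under the gradient update law with the uniform stability condition λ_min(2λ I - λ² Γ(t) Γ(t)ᵀ) ≥ ζ > 0 for all t, the state estimation error converges to zero: lim_{t→∞} x̃(t) = 0, where x̃(t+1) = Γ(t)(θ - θ̂(t)). -/

import Mathlib

/-!
The parameter error `φ(t) = θ - θ̂(t)` is a Lyapunov function: since `x̃(t+1) = Γ(t) φ(t)` and
`φ(t+1) = φ(t) - λ Γ(t)ᵀ x̃(t+1)`, expanding the square gives
`|φ(t+1)|² = |φ(t)|² - x̃(t+1)ᵀ (2λI - λ²Γ(t)Γ(t)ᵀ) x̃(t+1) ≤ |φ(t)|² - ζ |x̃(t+1)|²`.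
Telescoping, `ζ ∑ |x̃(t+1)|² ≤ |φ(0)|²`, so the series converges and `x̃(t) → 0`.
-/

open Matrix Filter Topology

theorem Matrix.IsHermitian.mul_dotProduct_self_le_dotProduct_mulVec {m : Type*} [Fintype m]
    [DecidableEq m] {M : Matrix m m ℝ} (hM : M.IsHermitian) {ζ : ℝ}
    (h : ∀ i, ζ ≤ hM.eigenvalues i) (x : m → ℝ) :
    ζ * (x ⬝ᵥ x) ≤ x ⬝ᵥ M *ᵥ x := by
  have hpsd : (M - algebraMap ℝ _ ζ).PosSemidef := by
    refine posSemidef_iff_isHermitian_and_spectrum_nonneg.mpr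
      ⟨hM.sub (isHermitian_diagonal _), ?_⟩
    rw [← spectrum.sub_singleton_eq, hM.spectrum_real_eq_range_eigenvalues]
    rintro _ ⟨_, ⟨i, rfl⟩, _, rfl, rfl⟩
    exact sub_nonneg.mpr (h i)
  have := hpsd.dotProduct_mulVec_nonneg x
  simp only [star_trivial, sub_mulVec, dotProduct_sub, Algebra.algebraMap_eq_smul_one,
    smul_mulVec, one_mulVec, dotProduct_smul, smul_eq_mul] at this
  linarith

theorem dotProduct_self_gradient_update {m p R : Type*} [Fintype m] [Fintype p] [DecidableEq m]
    [CommRing R] (Γ : Matrix m p R) (φ : p → R) (lam : R) :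
    (φ - lam • Γᵀ *ᵥ (Γ *ᵥ φ)) ⬝ᵥ (φ - lam • Γᵀ *ᵥ (Γ *ᵥ φ))
      = φ ⬝ᵥ φ - (Γ *ᵥ φ) ⬝ᵥ ((2 * lam) • 1 - lam ^ 2 • (Γ * Γᵀ)) *ᵥ (Γ *ᵥ φ) := by
  have hcross : φ ⬝ᵥ Γᵀ *ᵥ (Γ *ᵥ φ) = (Γ *ᵥ φ) ⬝ᵥ (Γ *ᵥ φ) := by
    rw [dotProduct_mulVec, vecMul_transpose]
  have hquad : (Γ *ᵥ φ) ⬝ᵥ (Γ * Γᵀ) *ᵥ (Γ *ᵥ φ)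
      = (Γᵀ *ᵥ (Γ *ᵥ φ)) ⬝ᵥ Γᵀ *ᵥ (Γ *ᵥ φ) := by
    rw [← mulVec_mulVec, dotProduct_mulVec, ← mulVec_transpose]
  simp only [sub_dotProduct, dotProduct_sub, smul_dotProduct, dotProduct_smul, sub_mulVec,
    smul_mulVec, one_mulVec, smul_eq_mul, hquad, dotProduct_comm _ φ, hcross]
  ring

theorem tendsto_zero_of_add_mul_le {V E : ℕ → ℝ} {ζ : ℝ} (hζ : 0 < ζ) (hV : ∀ t, 0 ≤ V t)
    (hE : ∀ t, 0 ≤ E t) (h : ∀ t, V (t + 1) + ζ * E t ≤ V t) :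
    Tendsto E atTop (𝓝 0) := by
  have hsum : Summable fun t => ζ * E t := by
    refine summable_of_sum_range_le (c := V 0) (fun t => mul_nonneg hζ.le (hE t)) fun N => ?_
    calc ∑ t ∈ Finset.range N, ζ * E t ≤ ∑ t ∈ Finset.range N, (V t - V (t + 1)) :=
          Finset.sum_le_sum fun t _ => by linarith [h t]
      _ = V 0 - V N := Finset.sum_range_sub' V N
      _ ≤ V 0 := by linarith [hV N]
  exact ((summable_mul_left_iff hζ.ne').mp hsum).tendsto_atTop_zero

theorem tendsto_zero_of_tendsto_dotProduct_self {ι α : Type*} [Fintype ι] {l : Filter α}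
    {x : α → ι → ℝ} (hx : Tendsto (fun a => x a ⬝ᵥ x a) l (𝓝 0)) : Tendsto x l (𝓝 0) := by
  refine tendsto_pi_nhds.mpr fun i => ?_
  have hsq : Tendsto (fun a => x a i ^ 2) l (𝓝 0) :=
    squeeze_zero (fun a => sq_nonneg _) (fun a => by
      rw [sq]
      exact Finset.single_le_sum (f := fun j => x a j * x a j)
        (fun j _ => mul_self_nonneg _) (Finset.mem_univ i)) hx
  refine (tendsto_zero_iff_abs_tendsto_zero _).mpr ?_
  simpa only [Real.sqrt_sq_eq_abs, Real.sqrt_zero, Function.comp_def] using hsq.sqrt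

theorem stmt_4_general {n p : ℕ} (lam ζ : ℝ) (hζ : 0 < ζ)
    (Γ : ℕ → Matrix (Fin n) (Fin p) ℝ)
    (θ : Fin p → ℝ) (θhat : ℕ → Fin p → ℝ) (xtil : ℕ → Fin n → ℝ)
    (hx : ∀ t, xtil (t + 1) = (Γ t).mulVec (θ - θhat t))
    (hupd : ∀ t, θhat (t + 1) = θhat t + lam • (Γ t)ᵀ.mulVec (xtil (t + 1)))
    (hM : ∀ t, ((2 * lam) • (1 : Matrix (Fin n) (Fin n) ℝ)
      - lam ^ 2 • (Γ t * (Γ t)ᵀ)).IsHermitian)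
    (heig : ∀ t i, ζ ≤ (hM t).eigenvalues i) :
    Tendsto xtil atTop (nhds 0) := by
  have hdecrease : ∀ t, (θ - θhat (t + 1)) ⬝ᵥ (θ - θhat (t + 1))
      + ζ * (xtil (t + 1) ⬝ᵥ xtil (t + 1)) ≤ (θ - θhat t) ⬝ᵥ (θ - θhat t) := by
    intro t
    have hstep : θ - θhat (t + 1) = (θ - θhat t) - lam • (Γ t)ᵀ *ᵥ (Γ t *ᵥ (θ - θhat t)) := by
      rw [hupd, hx, sub_add_eq_sub_sub]
    rw [hstep, dotProduct_self_gradient_update, ← hx]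
    linarith [(hM t).mul_dotProduct_self_le_dotProduct_mulVec (heig t) (xtil (t + 1))]
  have herr := tendsto_zero_of_add_mul_le hζ (fun t => dotProduct_self_star_nonneg (θ - θhat t))
    (fun t => dotProduct_self_star_nonneg (xtil (t + 1))) hdecrease
  exact (tendsto_add_atTop_iff_nat 1).mp (tendsto_zero_of_tendsto_dotProduct_self herr)

/-- Uniform stability condition `λ_min(2λI - λ²Γ(t)Γ(t)ᵀ) ≥ ζ > 0` implies that the
state estimation error `x̃(t)` converges to zero. -/
theorem stmt_4 {n p : ℕ} (lam ζ : ℝ) (hlam : 0 < lam) (hζ : 0 < ζ)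
    (Γ : ℕ → Matrix (Fin n) (Fin p) ℝ)
    (θ : Fin p → ℝ) (θhat : ℕ → Fin p → ℝ) (xtil : ℕ → Fin n → ℝ)
    (hx : ∀ t, xtil (t + 1) = (Γ t).mulVec (θ - θhat t))
    (hupd : ∀ t, θhat (t + 1) = θhat t + lam • (Γ t)ᵀ.mulVec (xtil (t + 1)))
    (hM : ∀ t, ((2 * lam) • (1 : Matrix (Fin n) (Fin n) ℝ)
      - lam ^ 2 • (Γ t * (Γ t)ᵀ)).IsHermitian)
    (heig : ∀ t i, ζ ≤ (hM t).eigenvalues i) :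
    Tendsto xtil atTop (nhds 0) :=
  stmt_4_general lam ζ hζ Γ θ θhat xtil hx hupd hM heig
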